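/- Let D = Dⁿ ∪ Dˣ be a database instance, Q a monotone Boolean query, t ∈ Dⁿ, and Γ ⊆ Dⁿ with t ∉ Γ. Then t is a most responsible actual cause for Q with C-minimal contingency set Γ (i.e., Γ is a contingency set for t of minimum cardinality) if and only if Γ ∪ {t} is a minimum hitting set for 𝔖ⁿ(D). (Proposition 6(b)) -/

import Mathlib

open scoped Classical

variable {α : Type*} [DecidableEq α]

/-- A monotone Boolean query on database instances (finite sets of tuples). -/
def MonotoneQuery (Q : Finset α → Prop) : Prop :=
  ∀ ⦃X Y : Finset α⦄, X ⊆ Y → Q X → Q Y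

/-- `Γ` is a contingency set for tuple `t` wrt query `Q`, instance `D`,
endogenous part `Dn`. -/
def IsContingency (D Dn : Finset α) (Q : Finset α → Prop) (t : α) (Γ : Finset α) : Prop :=
  Γ ⊆ Dn ∧ t ∉ Γ ∧ Q (D \ Γ) ∧ ¬ Q (D \ (Γ ∪ {t}))

/-- `t` is an actual cause for `Q`. -/
def IsActualCause (D Dn : Finset α) (Q : Finset α → Prop) (t : α) : Prop :=
  t ∈ Dn ∧ ∃ Γ : Finset α, IsContingency D Dn Q t Γ

/-- Minimum cardinality of a contingency set for `t`. -/
noncomputable def minContingency (D Dn : Finset α) (Q : Finset α → Prop) (t : α) : ℕ :=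
  sInf {m : ℕ | ∃ Γ : Finset α, IsContingency D Dn Q t Γ ∧ Γ.card = m}

/-- Responsibility of `t`: `1/(1+m)` with `m` the minimum size of a contingency set,
and `0` if `t` is not an actual cause. -/
noncomputable def resp (D Dn : Finset α) (Q : Finset α → Prop) (t : α) : ℚ :=
  if IsActualCause D Dn Q t then 1 / (1 + (minContingency D Dn Q t : ℚ)) else 0

/-- `t` is a most responsible actual cause. -/
def IsMostResponsibleCause (D Dn : Finset α) (Q : Finset α → Prop) (t : α) : Prop :=
  IsActualCause D Dn Q t ∧ ∀ t' : α, ¬ resp D Dn Q t < resp D Dn Q t'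

/-- `D'` is an S-repair of `D` wrt the denial constraint `¬ Q`. -/
def IsSRepair (D : Finset α) (Q : Finset α → Prop) (D' : Finset α) : Prop :=
  D' ⊆ D ∧ ¬ Q D' ∧ ∀ D'' : Finset α, D'' ⊆ D → ¬ Q D'' → D' ⊆ D'' → D'' = D'

/-- `D'` is a C-repair of `D` wrt the denial constraint `¬ Q`. -/
def IsCRepair (D : Finset α) (Q : Finset α → Prop) (D' : Finset α) : Prop :=
  D' ⊆ D ∧ ¬ Q D' ∧ ∀ D'' : Finset α, D'' ⊆ D → ¬ Q D'' → D''.card ≤ D'.card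

/-- `Γ ∈ CT(t)`: `Γ` is an S-minimal contingency set for `t`. -/
def InCT (D Dn : Finset α) (Q : Finset α → Prop) (t : α) (Γ : Finset α) : Prop :=
  IsContingency D Dn Q t Γ ∧ ∀ Γ'' : Finset α, Γ'' ⊂ Γ → Q (D \ (Γ'' ∪ {t}))

/-- `𝔖(D)`: S-minimal subsets of `D` satisfying `Q`. -/
def Sfam (D : Finset α) (Q : Finset α → Prop) : Set (Finset α) :=
  {s | s ⊆ D ∧ Q s ∧ ∀ s' : Finset α, s' ⊂ s → ¬ Q s'}

/-- Subsets of `Dn` contained in some `s' ∈ 𝔖(D)` whose remainder is exogenous. -/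
def SnPre (D Dn Dx : Finset α) (Q : Finset α → Prop) : Set (Finset α) :=
  {s | s ⊆ Dn ∧ ∃ s' ∈ Sfam D Q, s ⊆ s' ∧ s' \ s ⊆ Dx}

/-- `𝔖ⁿ(D)`: the inclusion-minimal elements of `SnPre`. -/
def SnFam (D Dn Dx : Finset α) (Q : Finset α → Prop) : Set (Finset α) :=
  {s ∈ SnPre D Dn Dx Q | ∀ s' ∈ SnPre D Dn Dx Q, s' ⊆ s → s' = s}

/-- `H` is a hitting set for `𝔖ⁿ(D)`. -/
def IsHittingSet (D Dn Dx : Finset α) (Q : Finset α → Prop) (H : Finset α) : Prop :=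
  H ⊆ Dn ∧ ∀ s ∈ SnFam D Dn Dx Q, (H ∩ s).Nonempty

/-- `H` is an S-minimal hitting set for `𝔖ⁿ(D)`. -/
def IsSMinimalHittingSet (D Dn Dx : Finset α) (Q : Finset α → Prop) (H : Finset α) : Prop :=
  IsHittingSet D Dn Dx Q H ∧ ∀ H' : Finset α, H' ⊂ H → ¬ IsHittingSet D Dn Dx Q H'

/-- `H` is a minimum-cardinality hitting set for `𝔖ⁿ(D)`. -/
def IsMinimumHittingSet (D Dn Dx : Finset α) (Q : Finset α → Prop) (H : Finset α) : Prop :=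
  IsHittingSet D Dn Dx Q H ∧ ∀ H' : Finset α, IsHittingSet D Dn Dx Q H' → H.card ≤ H'.card

/-- `Δ` is a diagnosis for the diagnosis problem associated with `Q`. -/
def IsDiagnosis (D Dn : Finset α) (Q : Finset α → Prop) (Δ : Finset α) : Prop :=
  Δ ⊆ Dn ∧ ¬ Q (D \ Δ)

/-- `Δ ∈ 𝒟(ℳ,t)`: `Δ` is an inclusion-minimal diagnosis containing `t`. -/
def IsMinimalDiagnosisWith (D Dn : Finset α) (Q : Finset α → Prop) (t : α)
    (Δ : Finset α) : Prop :=
  IsDiagnosis D Dn Q Δ ∧ t ∈ Δ ∧ ∀ Δ' : Finset α, Δ' ⊂ Δ → ¬ IsDiagnosis D Dn Q Δ'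

/-- `Δ ∈ MCD(ℳ,t)`: `Δ` is an element of `𝒟(ℳ,t)` of minimum cardinality. -/
def IsMCDWith (D Dn : Finset α) (Q : Finset α → Prop) (t : α) (Δ : Finset α) : Prop :=
  IsMinimalDiagnosisWith D Dn Q t Δ ∧
    ∀ Δ' : Finset α, IsMinimalDiagnosisWith D Dn Q t Δ' → Δ.card ≤ Δ'.card

/-!
For `H ⊆ Dⁿ`, `H` hits every set of `𝔖ⁿ(D)` exactly when `Q (D \ H)` fails, since a
witness of `Q (D \ H)` shrinks to an element of `𝔖(D)` whose endogenous part avoids `H`. So hitting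
sets are the sets `Γ ∪ {t}` with `Γ` a contingency set for `t`, up to shrinking: a hitting set `H`
contains an inclusion-minimal `H'` with `¬ Q (D \ H')`, and removing any `t' ∈ H'` leaves a
contingency set for `t'`. Hence `Γ ∪ {t}` is a minimum hitting set iff `Γ` has minimum
cardinality among the contingency sets of all tuples, which is what `t` being most responsible
with C-minimal contingency set `Γ` says.
-/

theorem Finset.card_union_singleton_of_notMem {t : α} {Γ : Finset α} (htΓ : t ∉ Γ) :
    (Γ ∪ {t}).card = Γ.card + 1 := by
  rw [Finset.card_union_of_disjoint (Finset.disjoint_singleton_right.mpr htΓ),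
    Finset.card_singleton]

section

variable {D Dn Dx : Finset α} {Q : Finset α → Prop}

omit [DecidableEq α] in
theorem exists_mem_Sfam_subset {X : Finset α} (hXD : X ⊆ D) (hQX : Q X) :
    ∃ s ∈ Sfam D Q, s ⊆ X := by
  obtain ⟨s, hsX, hmin⟩ := exists_minimal_le_of_wellFoundedLT Q X hQX
  exact ⟨s, ⟨hsX.trans hXD, hmin.prop, fun s' hlt hs' => hmin.not_lt hs' hlt⟩, hsX⟩

theorem exists_mem_SnFam_subset {s : Finset α} (hs : s ∈ SnPre D Dn Dx Q) :
    ∃ s₀ ∈ SnFam D Dn Dx Q, s₀ ⊆ s := by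
  obtain ⟨s₀, hs₀s, hmin⟩ :=
    exists_minimal_le_of_wellFoundedLT (· ∈ SnPre D Dn Dx Q) s hs
  exact ⟨s₀, ⟨hmin.prop, fun s' hs' hle => hmin.eq_of_le hs' hle⟩, hs₀s⟩

theorem IsHittingSet.not_query_sdiff (hpart : D ⊆ Dn ∪ Dx) {H : Finset α}
    (hH : IsHittingSet D Dn Dx Q H) : ¬ Q (D \ H) := by
  intro hQ
  obtain ⟨s', hs', hs'H⟩ := exists_mem_Sfam_subset Finset.sdiff_subset hQ
  have hpre : s' ∩ Dn ∈ SnPre D Dn Dx Q := by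
    refine ⟨Finset.inter_subset_right, s', hs', Finset.inter_subset_left, fun x hx => ?_⟩
    simp only [Finset.mem_sdiff, Finset.mem_inter, not_and] at hx
    have hx' := hpart (hs'.1 hx.1)
    rw [Finset.mem_union] at hx'
    exact hx'.resolve_left (hx.2 hx.1)
  obtain ⟨s₀, hs₀, hs₀s'⟩ := exists_mem_SnFam_subset hpre
  obtain ⟨x, hx⟩ := hH.2 s₀ hs₀
  obtain ⟨hxH, hxs₀⟩ := Finset.mem_inter.mp hx
  exact (Finset.mem_sdiff.mp (hs'H (Finset.inter_subset_left (hs₀s' hxs₀)))).2 hxH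

theorem isHittingSet_of_not_query_sdiff (hdisj : Disjoint Dn Dx) (hmono : MonotoneQuery Q)
    {H : Finset α} (hH : H ⊆ Dn) (hnQ : ¬ Q (D \ H)) : IsHittingSet D Dn Dx Q H := by
  refine ⟨hH, fun s hs => Finset.nonempty_iff_ne_empty.mpr fun hHs => hnQ ?_⟩
  obtain ⟨⟨-, s', hs', -, hs'x⟩, -⟩ := hs
  -- the part of `s'` outside `s` is exogenous, hence disjoint from `H ⊆ Dn`
  have hs'H : s' ⊆ D \ H := fun x hx => Finset.mem_sdiff.mpr ⟨hs'.1 hx, fun hxH => by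
    by_cases hxs : x ∈ s
    · exact Finset.notMem_empty x (hHs ▸ Finset.mem_inter.mpr ⟨hxH, hxs⟩)
    · exact Finset.disjoint_left.mp hdisj (hH hxH) (hs'x (Finset.mem_sdiff.mpr ⟨hx, hxs⟩))⟩
  exact hmono hs'H hs'.2.1

theorem IsContingency.isHittingSet (hdisj : Disjoint Dn Dx) (hmono : MonotoneQuery Q)
    {t : α} {Γ : Finset α} (h : IsContingency D Dn Q t Γ) (ht : t ∈ Dn) :
    IsHittingSet D Dn Dx Q (Γ ∪ {t}) :=
  isHittingSet_of_not_query_sdiff hdisj hmono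
    (Finset.union_subset h.1 (Finset.singleton_subset_iff.mpr ht)) h.2.2.2

theorem exists_contingency_union_subset_of_not_query_sdiff (hQD : Q D) {H : Finset α}
    (hH : H ⊆ Dn) (hnQ : ¬ Q (D \ H)) :
    ∃ t ∈ H, ∃ Γ, IsContingency D Dn Q t Γ ∧ Γ ∪ {t} ⊆ H := by
  obtain ⟨H', hH'H, hmin⟩ := exists_minimal_le_of_wellFoundedLT (fun K => ¬ Q (D \ K)) H hnQ
  obtain ⟨t, htH'⟩ : H'.Nonempty := by
    rw [Finset.nonempty_iff_ne_empty]
    rintro rfl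
    exact hmin.prop (by rwa [Finset.sdiff_empty])
  have hunion : H'.erase t ∪ {t} = H' := by
    rw [Finset.union_comm, ← Finset.insert_eq, Finset.insert_erase htH']
  refine ⟨t, hH'H htH', H'.erase t, ⟨(Finset.erase_subset t H').trans (hH'H.trans hH),
    Finset.notMem_erase t H', ?_, ?_⟩, ?_⟩
  · exact not_not.mp fun h => hmin.not_lt h (Finset.erase_ssubset htH')
  · rw [hunion]; exact hmin.prop
  · rw [hunion]; exact hH'H

theorem minContingency_le {t : α} {Γ : Finset α} (h : IsContingency D Dn Q t Γ) :
    minContingency D Dn Q t ≤ Γ.card :=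
  Nat.sInf_le ⟨Γ, h, rfl⟩

theorem IsActualCause.exists_card_eq_minContingency {t : α} (h : IsActualCause D Dn Q t) :
    ∃ Γ, IsContingency D Dn Q t Γ ∧ Γ.card = minContingency D Dn Q t :=
  Nat.sInf_mem (s := {m | ∃ Γ, IsContingency D Dn Q t Γ ∧ Γ.card = m})
    (h.2.elim fun Γ hΓ => ⟨Γ.card, Γ, hΓ, rfl⟩)

theorem IsActualCause.resp_eq {t : α} (h : IsActualCause D Dn Q t) :
    resp D Dn Q t = 1 / (1 + (minContingency D Dn Q t : ℚ)) :=
  if_pos h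

theorem IsActualCause.resp_le_resp_iff {t t' : α} (ht : IsActualCause D Dn Q t)
    (ht' : IsActualCause D Dn Q t') :
    resp D Dn Q t' ≤ resp D Dn Q t ↔ minContingency D Dn Q t ≤ minContingency D Dn Q t' := by
  rw [ht.resp_eq, ht'.resp_eq, one_div_le_one_div (by positivity) (by positivity)]
  exact_mod_cast add_le_add_iff_left 1

theorem isMostResponsibleCause_iff {t : α} :
    IsMostResponsibleCause D Dn Q t ↔ IsActualCause D Dn Q t ∧
      ∀ t' ∈ Dn, ∀ Γ', IsContingency D Dn Q t' Γ' → minContingency D Dn Q t ≤ Γ'.card := by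
  refine and_congr_right fun ht => ⟨fun hmax t' ht' Γ' hΓ' => ?_, fun hmin t' => ?_⟩
  · have ht'c : IsActualCause D Dn Q t' := ⟨ht', Γ', hΓ'⟩
    exact ((ht.resp_le_resp_iff ht'c).mp (not_lt.mp (hmax t'))).trans (minContingency_le hΓ')
  · refine not_lt.mpr ?_
    by_cases ht'c : IsActualCause D Dn Q t'
    · obtain ⟨Γ', hΓ', hcard⟩ := ht'c.exists_card_eq_minContingency
      exact (ht.resp_le_resp_iff ht'c).mpr (hcard ▸ hmin t' ht'c.1 Γ' hΓ')
    · rw [resp, if_neg ht'c, ht.resp_eq]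
      positivity

def IsMinimumContingency (D Dn : Finset α) (Q : Finset α → Prop) (t : α) (Γ : Finset α) : Prop :=
  t ∈ Dn ∧ IsContingency D Dn Q t Γ ∧
    ∀ t' ∈ Dn, ∀ Γ', IsContingency D Dn Q t' Γ' → Γ.card ≤ Γ'.card

theorem isMostResponsibleCause_and_card_le_iff_isMinimumContingency {t : α} {Γ : Finset α} :
    (IsMostResponsibleCause D Dn Q t ∧ IsContingency D Dn Q t Γ ∧
        ∀ Γ', IsContingency D Dn Q t Γ' → Γ.card ≤ Γ'.card) ↔
      IsMinimumContingency D Dn Q t Γ := by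
  constructor
  · rintro ⟨hmrc, hΓ, hmin⟩
    obtain ⟨ht, hle⟩ := isMostResponsibleCause_iff.mp hmrc
    obtain ⟨Γ₀, hΓ₀, hcard⟩ := ht.exists_card_eq_minContingency
    exact ⟨ht.1, hΓ, fun t' ht' Γ' hΓ' => (hmin Γ₀ hΓ₀).trans (hcard ▸ hle t' ht' Γ' hΓ')⟩
  · rintro ⟨ht, hΓ, hmin⟩
    exact ⟨isMostResponsibleCause_iff.mpr ⟨⟨ht, Γ, hΓ⟩,
      fun t' ht' Γ' hΓ' => (minContingency_le hΓ).trans (hmin t' ht' Γ' hΓ')⟩, hΓ, hmin t ht⟩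

theorem isMinimumHittingSet_union_singleton_iff (hpart : D ⊆ Dn ∪ Dx) (hdisj : Disjoint Dn Dx)
    (hmono : MonotoneQuery Q) {t : α} {Γ : Finset α} (htΓ : t ∉ Γ) :
    IsMinimumHittingSet D Dn Dx Q (Γ ∪ {t}) ↔ IsMinimumContingency D Dn Q t Γ := by
  have hcard := Finset.card_union_singleton_of_notMem htΓ
  constructor
  · rintro ⟨hhit, hmin⟩
    have hΓ : Γ ⊆ Dn := Finset.union_subset_left hhit.1
    have ht : t ∈ Dn := hhit.1 (Finset.mem_union_right Γ (Finset.mem_singleton_self t))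
    have hQΓ : Q (D \ Γ) := not_not.mp fun hnQ => by
      have := hmin Γ (isHittingSet_of_not_query_sdiff hdisj hmono hΓ hnQ)
      omega
    refine ⟨ht, ⟨hΓ, htΓ, hQΓ, hhit.not_query_sdiff hpart⟩, fun t' ht' Γ' hΓ' => ?_⟩
    have := hmin _ (hΓ'.isHittingSet hdisj hmono ht')
    rw [Finset.card_union_singleton_of_notMem hΓ'.2.1] at this
    omega
  · rintro ⟨ht, hΓ, hmin⟩
    refine ⟨hΓ.isHittingSet hdisj hmono ht, fun H hH => ?_⟩
    obtain ⟨t', ht'H, Γ', hΓ', hsub⟩ := exists_contingency_union_subset_of_not_query_sdiff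
      (hmono Finset.sdiff_subset hΓ.2.2.1) hH.1 (hH.not_query_sdiff hpart)
    have := Finset.card_le_card hsub
    rw [Finset.card_union_singleton_of_notMem hΓ'.2.1] at this
    have := hmin t' (hH.1 ht'H) Γ' hΓ'
    omega

end

theorem mrc_iff_minimum_hs_general (D Dn Dx : Finset α) (Q : Finset α → Prop)
    (hpart : D = Dn ∪ Dx) (hdisj : Disjoint Dn Dx) (hmono : MonotoneQuery Q)
    (t : α) (Γ : Finset α) (htΓ : t ∉ Γ) :
    (IsMostResponsibleCause D Dn Q t ∧ IsContingency D Dn Q t Γ ∧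
        ∀ Γ' : Finset α, IsContingency D Dn Q t Γ' → Γ.card ≤ Γ'.card) ↔
      IsMinimumHittingSet D Dn Dx Q (Γ ∪ {t}) :=
  isMostResponsibleCause_and_card_le_iff_isMinimumContingency.trans
    (isMinimumHittingSet_union_singleton_iff hpart.subset hdisj hmono htΓ).symm

/-- Proposition 6(b): `t` is a most responsible actual cause with C-minimal
contingency set `Γ` iff `Γ ∪ {t}` is a minimum hitting set for `𝔖ⁿ(D)`. -/
theorem mrc_iff_minimum_hs (D Dn Dx : Finset α) (Q : Finset α → Prop)
    (hpart : D = Dn ∪ Dx) (hdisj : Disjoint Dn Dx) (hmono : MonotoneQuery Q)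
    (t : α) (ht : t ∈ Dn) (Γ : Finset α) (hΓ : Γ ⊆ Dn) (htΓ : t ∉ Γ) :
    (IsMostResponsibleCause D Dn Q t ∧ IsContingency D Dn Q t Γ ∧
        ∀ Γ' : Finset α, IsContingency D Dn Q t Γ' → Γ.card ≤ Γ'.card) ↔
      IsMinimumHittingSet D Dn Dx Q (Γ ∪ {t}) :=
  mrc_iff_minimum_hs_general D Dn Dx Q hpart hdisj hmono t Γ htΓ
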